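/- arXiv:1403.3722 — 4 statements merged into one kernel-verified Lean document; each statement's English description precedes it below -/
import Mathlib

section
/- For every prime p ≥ 5, every faithful complex representation of PSL₂(𝔽_p) has dimension at least (p−1)/2. -/
open Matrix

open Polynomial
variable {p : ℕ} [Fact p.Prime]

def uu (a : ZMod p) : SpecialLinearGroup (Fin 2) (ZMod p) :=
  ⟨!![1, a; 0, 1], by simp [Matrix.det_fin_two_of]⟩

lemma uu_mul (a b : ZMod p) : uu a * uu b = uu (a + b) := by
  apply Subtype.ext
  show (!![1, a; 0, 1] : Matrix _ _ (ZMod p)) * !![1, b; 0, 1] = _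
  rw [Matrix.mul_fin_two]
  simp [uu, add_comm]

lemma uu_pow (k : ℕ) : (uu 1 : SpecialLinearGroup (Fin 2) (ZMod p)) ^ k = uu k := by
  induction k with
  | zero =>
    rw [pow_zero]
    apply Subtype.ext
    show (1 : Matrix _ _ (ZMod p)) = _
    rw [Matrix.one_fin_two]
    simp [uu]
  | succ n ih =>
    rw [pow_succ, ih, uu_mul]
    push_cast
    ring_nf

def tt (a : (ZMod p)ˣ) : SpecialLinearGroup (Fin 2) (ZMod p) :=
  ⟨!![(a : ZMod p), 0; 0, ((a⁻¹ : (ZMod p)ˣ) : ZMod p)], by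
    rw [Matrix.det_fin_two_of]
    simp only [mul_zero, zero_mul, sub_zero]
    exact_mod_cast a.mul_inv⟩

lemma tt_conj (a : (ZMod p)ˣ) :
    tt a * uu 1 * (tt a)⁻¹ = uu ((a : ZMod p) ^ 2) := by
  have h : (a : ZMod p) * ((a⁻¹ : (ZMod p)ˣ) : ZMod p) = 1 := a.mul_inv
  have h2 : (a : ZMod p) ^ 2 * ((a⁻¹ : (ZMod p)ˣ) : ZMod p) = a := by
    calc (a : ZMod p) ^ 2 * ((a⁻¹ : (ZMod p)ˣ) : ZMod p)
        = (a : ZMod p) * ((a : ZMod p) * ((a⁻¹ : (ZMod p)ˣ) : ZMod p)) := by ring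
      _ = a := by rw [h, mul_one]
  rw [mul_inv_eq_iff_eq_mul]
  apply Subtype.ext
  show (!![(a : ZMod p), 0; 0, _] : Matrix _ _ (ZMod p)) * !![1, 1; 0, 1]
      = !![1, (a : ZMod p)^2; 0, 1] * !![(a : ZMod p), 0; 0, _]
  rw [Matrix.mul_fin_two]
  rw [Matrix.mul_fin_two]
  simp only [one_mul, mul_one, zero_mul, mul_zero, add_zero, zero_add, h2]

lemma exists_eigen (q : ℕ) (hq : q ≠ 0) {W : Type*} [AddCommGroup W] [Module ℂ W]
    [FiniteDimensional ℂ W] (f : Module.End ℂ W) (hfp : f ^ q = 1) (hf1 : f ≠ 1) :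
    ∃ ζ : ℂ, ζ ^ q = 1 ∧ ζ ≠ 1 ∧ f.HasEigenvalue ζ := by
  rcases subsingleton_or_nontrivial W with hW | hW
  · exact absurd (Subsingleton.elim f 1) hf1
  have hint : IsIntegral ℂ f := Algebra.IsIntegral.isIntegral (R := ℂ) f
  set m := minpoly ℂ f with hm
  have hm0 : m ≠ 0 := minpoly.ne_zero hint
  have hdvd : m ∣ X ^ q - C 1 := minpoly.dvd ℂ f (by
    rw [map_sub, map_pow, aeval_X, aeval_C]
    simp [hfp])
  have hsep : m.Separable :=
    (Polynomial.separable_X_pow_sub_C (1 : ℂ) (Nat.cast_ne_zero.mpr hq) one_ne_zero).of_dvd hdvd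
  have hroot_poly : ∀ μ : ℂ, m.IsRoot μ → μ ^ q = 1 := by
    intro μ hμ
    have : (X ^ q - C 1 : ℂ[X]).IsRoot μ := hμ.dvd hdvd
    simpa [Polynomial.IsRoot, sub_eq_zero] using this
  have key : ∃ μ : ℂ, m.IsRoot μ ∧ μ ≠ 1 := by
    obtain ⟨μ, hμ⟩ := Complex.exists_root (f := m)
      (Polynomial.natDegree_pos_iff_degree_pos.mp (minpoly.natDegree_pos hint))
    by_cases hμ1 : μ = 1
    · subst hμ1
      obtain ⟨g, hg⟩ := Polynomial.dvd_iff_isRoot.mpr hμ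
      have hg0 : g ≠ 0 := by rintro rfl; rw [mul_zero] at hg; exact hm0 hg
      by_cases hgd : 0 < g.natDegree
      · obtain ⟨r, hr⟩ := Complex.exists_root (f := g) (Polynomial.natDegree_pos_iff_degree_pos.mp hgd)
        refine ⟨r, by rw [hg]; exact Polynomial.root_mul_left_of_isRoot _ hr, ?_⟩
        rintro rfl
        have hdg : (X - C (1:ℂ)) ∣ g := Polynomial.dvd_iff_isRoot.mpr hr
        obtain ⟨h, hh⟩ := hdg
        have : (X - C (1:ℂ)) * (X - C 1) ∣ m := ⟨h, by rw [hg, hh]; ring⟩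
        exact Polynomial.not_isUnit_of_natDegree_pos _ (by rw [Polynomial.natDegree_X_sub_C]; norm_num) (hsep.squarefree _ this)
      · exfalso
        apply hf1
        have hgC : g = C (g.coeff 0) := Polynomial.eq_C_of_natDegree_eq_zero (by omega)
        have hmono : m.Monic := minpoly.monic hint
        have hc : g.coeff 0 = 1 := by
          have h1 := hmono.leadingCoeff
          rw [hg, hgC, Polynomial.leadingCoeff_mul, Polynomial.leadingCoeff_X_sub_C,
            Polynomial.leadingCoeff_C, one_mul] at h1
          exact h1
        have hmX : m = X - C 1 := by rw [hg, hgC, hc, Polynomial.C_1, mul_one]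
        have := minpoly.aeval ℂ f
        rw [← hm, hmX, map_sub, aeval_X, aeval_C] at this
        have : f = algebraMap ℂ (Module.End ℂ W) 1 := by rwa [sub_eq_zero] at this
        simpa using this
    · exact ⟨μ, hμ, hμ1⟩
  obtain ⟨μ, hμroot, hμ1⟩ := key
  exact ⟨μ, hroot_poly μ hμroot, hμ1, (Module.End.hasEigenvalue_iff_isRoot).mpr hμroot⟩


/-- **Frobenius.** For every prime `p ≥ 5`, every faithful finite-dimensional
complex representation of `PSL₂(𝔽ₚ)` has dimension at least `(p-1)/2`. -/
theorem frobenius_bound_PSL2 (p : ℕ) (hp : p.Prime) (hp5 : 5 ≤ p)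
    (W : Type*) [AddCommGroup W] [Module ℂ W] [FiniteDimensional ℂ W]
    (ρ : Matrix.ProjectiveSpecialLinearGroup (Fin 2) (ZMod p) →*
      LinearMap.GeneralLinearGroup ℂ W)
    (hρ : Function.Injective ρ) :
    ((p : ℝ) - 1) / 2 ≤ Module.finrank ℂ W := by
  haveI : Fact p.Prime := ⟨hp⟩
  set π : SpecialLinearGroup (Fin 2) (ZMod p) →*
      Matrix.ProjectiveSpecialLinearGroup (Fin 2) (ZMod p) :=
    QuotientGroup.mk' (Subgroup.center (SpecialLinearGroup (Fin 2) (ZMod p))) with hπ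
  set ub : Matrix.ProjectiveSpecialLinearGroup (Fin 2) (ZMod p) := π (uu 1) with hub
  -- `ub` is nontrivial
  have hub_ne : ub ≠ 1 := by
    rw [hub, hπ]
    intro h
    have hmem := (QuotientGroup.eq_one_iff _).mp h
    obtain ⟨r, _, hr⟩ := Matrix.SpecialLinearGroup.mem_center_iff.mp hmem
    have h01 := congrArg (fun M : Matrix (Fin 2) (Fin 2) (ZMod p) => M 0 1) hr
    simp [uu, Matrix.scalar_apply, Matrix.diagonal_apply_ne] at h01
  -- `ub ^ p = 1`
  have hub_pow : ub ^ p = 1 := by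
    rw [hub, ← _root_.map_pow, uu_pow, ZMod.natCast_self]
    have : (uu (0 : ZMod p)) = 1 := by
      apply Subtype.ext
      show _ = (1 : Matrix _ _ (ZMod p))
      rw [Matrix.one_fin_two]
      simp [uu]
    rw [this, _root_.map_one]
  set F : Module.End ℂ W := ((ρ ub : (W →ₗ[ℂ] W)ˣ) : W →ₗ[ℂ] W) with hF
  have hFp : F ^ p = 1 := by
    rw [hF, ← Units.val_pow_eq_pow_val, ← _root_.map_pow, hub_pow, _root_.map_one, Units.val_one]
  have hF1 : F ≠ 1 := by
    intro h
    apply hub_ne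
    apply hρ
    rw [_root_.map_one]
    exact Units.ext h
  obtain ⟨ζ, hζp, hζ1, hζ⟩ := exists_eigen p hp.ne_zero F hFp hF1
  have horder : orderOf ζ = p := orderOf_eq_prime hζp hζ1
  -- closure of eigenvalues under square powers
  have key : ∀ a : (ZMod p)ˣ, F.HasEigenvalue (ζ ^ ((a : ZMod p) ^ 2).val) := by
    intro a
    obtain ⟨v, hv⟩ := hζ.exists_hasEigenvector
    set m : ℕ := ((a : ZMod p) ^ 2).val with hmdef
    have hconj : π (tt a) * ub * (π (tt a))⁻¹ = ub ^ m := by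
      rw [hub, ← _root_.map_pow, uu_pow, ← _root_.map_inv, ← _root_.map_mul, ← _root_.map_mul, tt_conj]
      congr 2
      rw [ZMod.natCast_zmod_val]
    set g : (W →ₗ[ℂ] W)ˣ := ρ (π (tt a)) with hgdef
    have hgF : (g : W →ₗ[ℂ] W) * F * ((g⁻¹ : (W →ₗ[ℂ] W)ˣ) : W →ₗ[ℂ] W) = F ^ m := by
      have h2 := congrArg ρ hconj
      rw [_root_.map_mul, _root_.map_mul, _root_.map_inv, _root_.map_pow] at h2
      have h3 := congrArg Units.val h2
      rw [Units.val_mul, Units.val_mul, Units.val_pow_eq_pow_val] at h3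
      exact h3
    have hcomm : F * ((g⁻¹ : (W →ₗ[ℂ] W)ˣ) : W →ₗ[ℂ] W)
        = ((g⁻¹ : (W →ₗ[ℂ] W)ˣ) : W →ₗ[ℂ] W) * F ^ m := by
      rw [← hgF]
      have : ((g⁻¹ : (W →ₗ[ℂ] W)ˣ) : W →ₗ[ℂ] W) * (g : W →ₗ[ℂ] W) = 1 := by
        rw [← Units.val_mul, inv_mul_cancel, Units.val_one]
      calc F * ((g⁻¹ : (W →ₗ[ℂ] W)ˣ) : W →ₗ[ℂ] W)
          = (((g⁻¹ : (W →ₗ[ℂ] W)ˣ) : W →ₗ[ℂ] W) * (g : W →ₗ[ℂ] W)) * F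
            * ((g⁻¹ : (W →ₗ[ℂ] W)ˣ) : W →ₗ[ℂ] W) := by rw [this, one_mul]
        _ = _ := by noncomm_ring
    set w : W := ((g⁻¹ : (W →ₗ[ℂ] W)ˣ) : W →ₗ[ℂ] W) v with hwdef
    have hw0 : w ≠ 0 := by
      intro h0
      apply hv.right
      have : (g : W →ₗ[ℂ] W) w = v := by
        rw [hwdef, ← LinearMap.comp_apply, ← Module.End.mul_eq_comp, ← Units.val_mul,
          mul_inv_cancel, Units.val_one, Module.End.one_apply]
      rw [← this, h0, _root_.map_zero]
    have hFm : (F ^ m) v = ζ ^ m • v := by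
      have := hv.left
      rw [Module.End.mem_eigenspace_iff] at this
      clear hcomm hgF
      induction m with
      | zero => simp
      | succ n ih =>
        rw [pow_succ', Module.End.mul_apply, ih, _root_.map_smul, this, smul_smul, ← pow_succ]
    have hweig : F w = ζ ^ m • w := by
      rw [hwdef, ← Module.End.mul_apply, hcomm, Module.End.mul_apply, hFm, _root_.map_smul]
    exact Module.End.hasEigenvalue_of_hasEigenvector
      ⟨Module.End.mem_eigenspace_iff.mpr hweig, hw0⟩
  -- counting squares
  set S : Finset (ZMod p) := Finset.image (fun a : (ZMod p)ˣ => (a : ZMod p) ^ 2)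
    Finset.univ with hS
  have hcard : p - 1 ≤ 2 * S.card := by
    have hfib : ∀ b ∈ S, (Finset.univ.filter
        (fun a : (ZMod p)ˣ => (a : ZMod p) ^ 2 = b)).card ≤ 2 := by
      intro b hb
      obtain ⟨c, _, rfl⟩ := Finset.mem_image.mp hb
      have hsub : (Finset.univ.filter
          (fun a : (ZMod p)ˣ => (a : ZMod p) ^ 2 = (c : ZMod p) ^ 2)) ⊆ {c, -c} := by
        intro a ha
        have ha2 : (a : ZMod p) ^ 2 = (c : ZMod p) ^ 2 := (Finset.mem_filter.mp ha).2
        have : ((a : ZMod p) - c) * ((a : ZMod p) + c) = 0 := by ring_nf; linear_combination ha2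
        rcases mul_eq_zero.mp this with h | h
        · have : (a : ZMod p) = c := by linear_combination h
          simp [Units.ext this]
        · have : (a : ZMod p) = -c := by linear_combination h
          have : a = -c := Units.ext (by simpa using this)
          simp [this]
      exact le_trans (Finset.card_le_card hsub)
        (le_trans (Finset.card_insert_le _ _) (by simp))
    have := Finset.card_le_mul_card_image (f := fun a : (ZMod p)ˣ => (a : ZMod p) ^ 2)
      Finset.univ 2 hfib
    rwa [Finset.card_univ, ZMod.card_units_eq_totient, Nat.totient_prime hp, ← hS] at this
  -- distinct eigenvalues
  have hE : ∀ x : S, F.HasEigenvalue (ζ ^ (x : ZMod p).val) := by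
    rintro ⟨x, hx⟩
    obtain ⟨a, _, rfl⟩ := Finset.mem_image.mp hx
    exact key a
  choose v hv using fun x : S => (hE x).exists_hasEigenvector
  have hinj : Function.Injective (fun x : S => ζ ^ ((x : ZMod p)).val) := by
    intro x y h
    apply Subtype.ext
    apply ZMod.val_injective
    exact pow_injOn_Iio_orderOf (by rw [horder]; exact ZMod.val_lt _)
      (by rw [horder]; exact ZMod.val_lt _) h
  have lin := F.eigenvectors_linearIndependent' (fun x : S => ζ ^ ((x : ZMod p)).val) hinj v hv
  have hle : S.card ≤ Module.finrank ℂ W := by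
    simpa [Fintype.card_coe] using lin.fintype_card_le_finrank
  have hfin : (p - 1 : ℕ) ≤ 2 * Module.finrank ℂ W := le_trans hcard (by omega)
  rw [div_le_iff₀ (by norm_num : (0:ℝ) < 2)]
  have h1p : 1 ≤ p := hp.one_lt.le
  have := (Nat.cast_le (α := ℝ)).mpr hfin
  push_cast [Nat.cast_sub h1p] at this
  linarith
end

section
/- Every additive character of the finite ring O/𝔭^n is of the form x + 𝔭^n ↦ ψ(Tr(bx)) for a unique coset b + 𝔭^{-ℓ} ∈ 𝔭^{-(n+ℓ)}/𝔭^{-ℓ}, where ℓ is the exponent of the inverse different; in particular the additive character group of O/𝔭^n is isomorphic to 𝔭^{-(n+ℓ)}/𝔭^{-ℓ}. -/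
open Multiplicative

noncomputable section

/-- The value group `ℤ ∪ {0}` of a discrete valuation. -/
abbrev ZM0 := WithZero (Multiplicative ℤ)

variable {F : Type*} [Field F]

/-- The fractional ideal `𝔭^m = {x ∈ F : ν(x) ≥ m}`, as an additive subgroup of `F`.
Here `v = exp(-ν)` is the associated multiplicative valuation. -/
def fracIdeal (v : Valuation F ZM0) (m : ℤ) : AddSubgroup F where
  carrier := {x | v x ≤ ((ofAdd (-m) : Multiplicative ℤ) : ZM0)}
  zero_mem' := by simp
  add_mem' := by
    intro a b ha hb
    exact le_trans (v.map_add a b) (max_le ha hb)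
  neg_mem' := by
    intro a ha
    simpa using ha

/-- The ideal `𝔭^n` of the ring of integers `O = v.integer`. -/
def powIdeal (v : Valuation F ZM0) (n : ℕ) : Ideal v.integer where
  carrier := {x | v (x : F) ≤ ((ofAdd (-(n : ℤ)) : Multiplicative ℤ) : ZM0)}
  zero_mem' := by simp
  add_mem' := by
    intro a b ha hb
    exact le_trans (v.map_add a b) (max_le ha hb)
  smul_mem' := by
    intro r x hx
    have hr : v (r : F) ≤ 1 := r.2
    have : v ((r : F) * (x : F)) = v (r : F) * v (x : F) := v.map_mul _ _
    calc v (((r • x : v.integer) : F)) = v (r : F) * v (x : F) := by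
          simp [Valuation.map_mul]
      _ ≤ 1 * ((ofAdd (-(n : ℤ)) : Multiplicative ℤ) : ZM0) := by
          exact mul_le_mul' hr hx
      _ = _ := one_mul _

/-- The finite local ring `O/𝔭^n`. -/
abbrev ResRing (v : Valuation F ZM0) (n : ℕ) := v.integer ⧸ powIdeal v n

end

section Aux
open Multiplicative
variable {F : Type*} [Field F]

namespace LCA

lemma coe_ofAdd_mul (a b : ℤ) :
    ((ofAdd a : Multiplicative ℤ) : ZM0) * ((ofAdd b : Multiplicative ℤ) : ZM0)
      = ((ofAdd (a + b) : Multiplicative ℤ) : ZM0) := by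
  rw [← WithZero.coe_mul, ← ofAdd_add]

lemma mem_fracIdeal {v : Valuation F ZM0} {m : ℤ} {x : F} :
    x ∈ fracIdeal v m ↔ v x ≤ ((ofAdd (-m) : Multiplicative ℤ) : ZM0) := Iff.rfl

lemma val_mul_le (v : Valuation F ZM0) {a b : F} {s t u : ℤ}
    (ha : v a ≤ ((ofAdd s : Multiplicative ℤ) : ZM0))
    (hb : v b ≤ ((ofAdd t : Multiplicative ℤ) : ZM0)) (h : s + t = u) :
    v (a * b) ≤ ((ofAdd u : Multiplicative ℤ) : ZM0) := by
  rw [v.map_mul, ← h, ← coe_ofAdd_mul]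
  exact mul_le_mul' ha hb

lemma mul_mem_iff (v : Valuation F ZM0) {c : F} {k : ℤ}
    (hc : v c = ((ofAdd k : Multiplicative ℤ) : ZM0)) (x : F) (m : ℤ) :
    v (c * x) ≤ ((ofAdd (k + m) : Multiplicative ℤ) : ZM0)
      ↔ v x ≤ ((ofAdd m : Multiplicative ℤ) : ZM0) := by
  rw [v.map_mul, hc]
  constructor
  · intro h
    have h2 := mul_le_mul_right h ((ofAdd (-k) : Multiplicative ℤ) : ZM0)
    rwa [← mul_assoc, coe_ofAdd_mul, coe_ofAdd_mul, neg_add_cancel, neg_add_cancel_left,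
      ofAdd_zero, WithZero.coe_one, one_mul] at h2
  · intro h
    have h2 := mul_le_mul_right h ((ofAdd k : Multiplicative ℤ) : ZM0)
    rwa [coe_ofAdd_mul] at h2

lemma val_ne_zero (v : Valuation F ZM0) {c : F} {k : ℤ}
    (hc : v c = ((ofAdd k : Multiplicative ℤ) : ZM0)) : c ≠ 0 := by
  intro h
  rw [h, v.map_zero] at hc
  exact WithZero.zero_ne_coe hc

/-- Multiplication by `c` as an additive equivalence between fractional ideals. -/
def fracEquiv (v : Valuation F ZM0) {k m M : ℤ} (c : F)
    (hc : v c = ((ofAdd k : Multiplicative ℤ) : ZM0)) (hk : k + -m = -M) :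
    ↥(fracIdeal v m) ≃+ ↥(fracIdeal v M) where
  toFun x := ⟨c * x, by
    have := (mul_mem_iff v hc (x : F) (-m)).mpr x.2
    rwa [hk] at this⟩
  invFun y := ⟨c⁻¹ * y, by
    have hc' : v c⁻¹ = ((ofAdd (-k) : Multiplicative ℤ) : ZM0) := by
      rw [map_inv₀, hc, ← WithZero.coe_inv, ← ofAdd_neg]
    have := (mul_mem_iff v hc' (y : F) (-M)).mpr y.2
    have he : -k + -M = -m := by omega
    rwa [he] at this⟩
  left_inv x := by
    ext
    exact inv_mul_cancel_left₀ (val_ne_zero v hc) _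
  right_inv y := by
    ext
    exact mul_inv_cancel_left₀ (val_ne_zero v hc) _
  map_add' x y := by
    ext
    exact mul_add c x y

/-- Congruence of quotients of fractional ideals under multiplication. -/
def quotCongr (v : Valuation F ZM0) {k m m' M M' : ℤ} (c : F)
    (hc : v c = ((ofAdd k : Multiplicative ℤ) : ZM0)) (hk : k + -m = -M) (hk' : k + -m' = -M') :
    (↥(fracIdeal v m) ⧸ (fracIdeal v m').addSubgroupOf (fracIdeal v m)) ≃
    (↥(fracIdeal v M) ⧸ (fracIdeal v M').addSubgroupOf (fracIdeal v M)) :=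
  Quotient.congr (fracEquiv v c hc hk).toEquiv (by
    intro a b
    rw [QuotientAddGroup.leftRel_apply, QuotientAddGroup.leftRel_apply,
      AddSubgroup.mem_addSubgroupOf, AddSubgroup.mem_addSubgroupOf]
    have h1 : ((-(fracEquiv v c hc hk).toEquiv a + (fracEquiv v c hc hk).toEquiv b :
        ↥(fracIdeal v M)) : F) = c * ((-a + b : ↥(fracIdeal v m)) : F) := by
      show -(c * (a : F)) + c * (b : F) = c * (-(a : F) + (b : F))
      ring
    rw [h1]
    constructor
    · intro h
      have := (mul_mem_iff v hc _ (-m')).mpr h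
      rwa [hk'] at this
    · intro h
      have := (mul_mem_iff v hc ((-a + b : ↥(fracIdeal v m)) : F) (-m')).mp (by rwa [hk'])
      exact this)

lemma mem_powIdeal {v : Valuation F ZM0} {n : ℕ} {x : v.integer} :
    x ∈ powIdeal v n ↔ v (x : F) ≤ ((ofAdd (-(n : ℤ)) : Multiplicative ℤ) : ZM0) := Iff.rfl

/-- `O/𝔭^n` is equivalent to `A 0 / A n`. -/
def resRingEquiv (v : Valuation F ZM0) (n : ℕ) :
    ResRing v n ≃ (↥(fracIdeal v 0) ⧸ (fracIdeal v (n : ℤ)).addSubgroupOf (fracIdeal v 0)) :=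
  Quotient.congr (Equiv.subtypeEquivRight (q := fun x => x ∈ fracIdeal v 0) (fun x => by
      show x ∈ v.integer ↔ x ∈ fracIdeal v 0
      rw [Valuation.mem_integer_iff, mem_fracIdeal, neg_zero, ofAdd_zero, WithZero.coe_one]))
    (by
      intro a b
      rw [Submodule.quotientRel_def, QuotientAddGroup.leftRel_apply,
        AddSubgroup.mem_addSubgroupOf, mem_powIdeal, mem_fracIdeal]
      show v ((a : F) - b) ≤ _ ↔ v (-(a : F) + b) ≤ _
      rw [neg_add_eq_sub, v.map_sub_swap])

lemma frac_le (v : Valuation F ZM0) {m m' : ℤ} (h : m' ≤ m) :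
    fracIdeal v m ≤ fracIdeal v m' := by
  intro x hx
  exact le_trans (mem_fracIdeal.mp hx) (WithZero.coe_le_coe.mpr (Multiplicative.ofAdd_le.mpr (by omega)))

/-- The nested subgroup `(A k ∩ A 0)` as a subgroup of `A 0` is equivalent to `A k`. -/
def nestEquiv (v : Valuation F ZM0) (k : ℕ) :
    ↥((fracIdeal v (k : ℤ)).addSubgroupOf (fracIdeal v 0)) ≃ ↥(fracIdeal v (k : ℤ)) where
  toFun x := ⟨x.1.1, AddSubgroup.mem_addSubgroupOf.mp x.2⟩
  invFun y := ⟨⟨y.1, frac_le v (by omega) y.2⟩, AddSubgroup.mem_addSubgroupOf.mpr y.2⟩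
  left_inv x := rfl
  right_inv y := rfl

lemma finite_quot (v : Valuation F ZM0) (hv : Function.Surjective v)
    [Finite (ResRing v 1)] (k : ℕ) :
    Finite (↥(fracIdeal v 0) ⧸ (fracIdeal v (k : ℤ)).addSubgroupOf (fracIdeal v 0)) := by
  induction k with
  | zero =>
    have htop : (fracIdeal v ((0 : ℕ) : ℤ)).addSubgroupOf (fracIdeal v 0) = ⊤ := by
      ext x
      simp only [AddSubgroup.mem_addSubgroupOf, AddSubgroup.mem_top, iff_true]
      exact_mod_cast x.2
    rw [htop]
    have := QuotientAddGroup.subsingleton_quotient_top (G := ↥(fracIdeal v 0))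
    exact Finite.of_subsingleton
  | succ k ih =>
    have h1 : Finite (↥(fracIdeal v 0) ⧸
        (fracIdeal v ((1 : ℕ) : ℤ)).addSubgroupOf (fracIdeal v 0)) :=
      Finite.of_equiv _ (resRingEquiv v 1)
    have hle : (fracIdeal v ((k + 1 : ℕ) : ℤ)).addSubgroupOf (fracIdeal v 0) ≤
        (fracIdeal v (k : ℤ)).addSubgroupOf (fracIdeal v 0) := by
      intro x hx
      rw [AddSubgroup.mem_addSubgroupOf] at hx ⊢
      exact frac_le v (by omega) hx
    obtain ⟨c, hc⟩ := hv ((ofAdd (k : ℤ) : Multiplicative ℤ) : ZM0)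
    -- the middle quotient `A k / A (k+1)` inside `A 0`
    have e2 : (↥((fracIdeal v (k : ℤ)).addSubgroupOf (fracIdeal v 0)) ⧸
          ((fracIdeal v ((k + 1 : ℕ) : ℤ)).addSubgroupOf (fracIdeal v 0)).addSubgroupOf
            ((fracIdeal v (k : ℤ)).addSubgroupOf (fracIdeal v 0))) ≃
        (↥(fracIdeal v (k : ℤ)) ⧸
          (fracIdeal v ((k + 1 : ℕ) : ℤ)).addSubgroupOf (fracIdeal v (k : ℤ))) := by
      refine Quotient.congr (nestEquiv v k) ?_
      intro a b
      rw [QuotientAddGroup.leftRel_apply, QuotientAddGroup.leftRel_apply,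
        AddSubgroup.mem_addSubgroupOf, AddSubgroup.mem_addSubgroupOf,
        AddSubgroup.mem_addSubgroupOf]
      exact Iff.rfl
    have e3 : (↥(fracIdeal v (k : ℤ)) ⧸
          (fracIdeal v ((k + 1 : ℕ) : ℤ)).addSubgroupOf (fracIdeal v (k : ℤ))) ≃
        (↥(fracIdeal v 0) ⧸ (fracIdeal v ((1 : ℕ) : ℤ)).addSubgroupOf (fracIdeal v 0)) :=
      quotCongr v c hc (by omega) (by push_cast; ring)
    have hmid : Finite (↥((fracIdeal v (k : ℤ)).addSubgroupOf (fracIdeal v 0)) ⧸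
          ((fracIdeal v ((k + 1 : ℕ) : ℤ)).addSubgroupOf (fracIdeal v 0)).addSubgroupOf
            ((fracIdeal v (k : ℤ)).addSubgroupOf (fracIdeal v 0))) :=
      Finite.of_equiv _ (e2.trans e3).symm
    exact Finite.of_equiv _ (AddSubgroup.quotientEquivProdOfLE hle).symm

end LCA
end Aux

section Chars
open Multiplicative
variable {F : Type*} [Field F]
namespace LCA

variable (v : Valuation F ZM0) {E : Type*} [AddCommGroup E] (Tr : F →+ E) (ψ : AddChar E ℂ)

lemma psi_shift (b x y : F) (h1 : ψ (Tr (b * (x - y))) = 1) :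
    ψ (Tr (b * x)) = ψ (Tr (b * y)) := by
  have e : b * x = b * (x - y) + b * y := by ring
  rw [e, map_add, AddChar.map_add_eq_mul, h1, one_mul]

lemma psi_ne_zero (t : E) : ψ t ≠ 0 := by
  intro h
  have h1 : ψ t * ψ (-t) = 1 := by
    rw [← AddChar.map_add_eq_mul, add_neg_cancel, AddChar.map_zero_eq_one]
  rw [h, zero_mul] at h1
  exact zero_ne_one h1

lemma psi_cancel (b₁ b₂ x : F) (h : ψ (Tr (b₁ * x)) = ψ (Tr (b₂ * x))) :
    ψ (Tr ((b₁ - b₂) * x)) = 1 := by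
  have h2 : ψ (Tr ((b₁ - b₂) * x)) * ψ (Tr (b₂ * x)) = 1 * ψ (Tr (b₂ * x)) := by
    rw [one_mul, ← AddChar.map_add_eq_mul, ← map_add]
    have e : (b₁ - b₂) * x + b₂ * x = b₁ * x := by ring
    rw [e, h]
  exact mul_right_cancel₀ (psi_ne_zero ψ _) h2

lemma psi_shift' (b₁ b₂ x : F) (h1 : ψ (Tr ((b₁ - b₂) * x)) = 1) :
    ψ (Tr (b₁ * x)) = ψ (Tr (b₂ * x)) := by
  have e : b₁ * x = (b₁ - b₂) * x + b₂ * x := by ring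
  rw [e, map_add, AddChar.map_add_eq_mul, h1, one_mul]

/-- The additive character `x + 𝔭^n ↦ ψ(Tr(bx))` of `O/𝔭^n`. -/
def resChar (n : ℕ) (b : F)
    (hb : ∀ x : F, v x ≤ ((ofAdd (-(n : ℤ)) : Multiplicative ℤ) : ZM0) → ψ (Tr (b * x)) = 1) :
    AddChar (ResRing v n) ℂ where
  toFun := Quotient.lift (fun x : v.integer => ψ (Tr (b * (x : F))))
    (fun x y h => by
      have hxy : x - y ∈ powIdeal v n := (Submodule.quotientRel_def _).mp h
      have hxy' : v ((x : F) - (y : F)) ≤ ((ofAdd (-(n : ℤ)) : Multiplicative ℤ) : ZM0) := by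
        have h2 := mem_powIdeal.mp hxy
        push_cast at h2
        exact h2
      exact psi_shift Tr ψ b _ _ (hb _ hxy'))
  map_zero_eq_one' := by
    have h0 : (0 : ResRing v n) = Submodule.Quotient.mk 0 := (Submodule.Quotient.mk_zero _).symm
    rw [h0]
    show ψ (Tr (b * ((0 : v.integer) : F))) = 1
    simp
  map_add_eq_mul' := by
    intro a c
    refine Quotient.inductionOn₂' a c (fun x y => ?_)
    rw [Submodule.Quotient.mk''_eq_mk, Submodule.Quotient.mk''_eq_mk,
      ← Submodule.Quotient.mk_add]
    show ψ (Tr (b * ((x + y : v.integer) : F))) =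
      ψ (Tr (b * (x : F))) * ψ (Tr (b * (y : F)))
    push_cast
    rw [mul_add, map_add, AddChar.map_add_eq_mul]

lemma resChar_mk (n : ℕ) (b : F)
    (hb : ∀ x : F, v x ≤ ((ofAdd (-(n : ℤ)) : Multiplicative ℤ) : ZM0) → ψ (Tr (b * x)) = 1)
    (x : v.integer) :
    resChar v Tr ψ n b hb (Ideal.Quotient.mk (powIdeal v n) x) = ψ (Tr (b * (x : F))) := rfl

/-- The map `b + 𝔭^{-ℓ} ↦ (x ↦ ψ(Tr(bx)))`. -/
def charMap (n ℓ : ℕ)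
    (hψ : ∀ b : F, v b ≤ ((ofAdd (ℓ : ℤ) : Multiplicative ℤ) : ZM0) →
      ∀ x : F, v x ≤ 1 → ψ (Tr (b * x)) = 1) :
    (↥(fracIdeal v (-(n : ℤ) - ℓ)) ⧸
        (fracIdeal v (-(ℓ : ℤ))).addSubgroupOf (fracIdeal v (-(n : ℤ) - ℓ))) →
      AddChar (ResRing v n) ℂ :=
  Quotient.lift
    (fun b => resChar v Tr ψ n (b : F)
      (fun x hx => by
        have hbx : v ((b : F) * x) ≤ ((ofAdd (ℓ : ℤ) : Multiplicative ℤ) : ZM0) :=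
          val_mul_le v b.2 hx (by ring)
        have h2 := hψ _ hbx 1 (le_of_eq (v.map_one))
        rwa [mul_one] at h2))
    (fun b₁ b₂ h => by
      have hmem : ((-b₁ + b₂ : ↥(fracIdeal v (-(n : ℤ) - ℓ))) : F) ∈ fracIdeal v (-(ℓ : ℤ)) :=
        AddSubgroup.mem_addSubgroupOf.mp (QuotientAddGroup.leftRel_apply.mp h)
      have hd : v ((b₂ : F) - b₁) ≤ ((ofAdd (ℓ : ℤ) : Multiplicative ℤ) : ZM0) := by
        have h2 := mem_fracIdeal.mp hmem
        rw [neg_neg] at h2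
        have e : ((-b₁ + b₂ : ↥(fracIdeal v (-(n : ℤ) - ℓ))) : F) = (b₂ : F) - b₁ := by
          push_cast; ring
        rwa [e] at h2
      refine DFunLike.ext _ _ (fun z => ?_)
      refine Quotient.inductionOn' z (fun x => ?_)
      show ψ (Tr ((b₁ : F) * (x : F))) = ψ (Tr ((b₂ : F) * (x : F)))
      exact (psi_shift' Tr ψ _ _ _ (hψ _ hd (x : F) x.2)).symm)

end LCA
end Chars

section

open Multiplicative

variable {F : Type*} [Field F]

/-- Let `F` be a non-Archimedean local field with ring of integers
`O = v.integer` and prime ideal `𝔭`, let `Tr : F → E` be the trace map and `ψ` the standard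
additive character of `E`, and let `ℓ` be the exponent of the inverse different, characterized
by: `ψ(Tr(b·x)) = 1` for all `x ∈ O` iff `ν(b) ≥ -ℓ`.  Then every additive character of
`O/𝔭^n` has the form `x + 𝔭^n ↦ ψ(Tr(bx))` for some `b ∈ 𝔭^{-(n+ℓ)}`, unique modulo
`𝔭^{-ℓ}`; in particular the character group of `O/𝔭^n` is in bijection with
`𝔭^{-(n+ℓ)}/𝔭^{-ℓ}`. -/
theorem addChar_of_local_ring (v : Valuation F ZM0) (hv : Function.Surjective v)
    [Finite (ResRing v 1)]
    (E : Type*) [AddCommGroup E] (Tr : F →+ E) (ψ : AddChar E ℂ)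
    (ℓ : ℕ)
    (hℓ : ∀ b : F,
      (∀ x : F, v x ≤ 1 → ψ (Tr (b * x)) = 1) ↔
        v b ≤ ((ofAdd (ℓ : ℤ) : Multiplicative ℤ) : ZM0))
    (n : ℕ) (hn : 0 < n) :
    (∀ χ : AddChar (ResRing v n) ℂ,
        (∃ b : F, v b ≤ ((ofAdd ((n : ℤ) + ℓ) : Multiplicative ℤ) : ZM0) ∧
          ∀ x : v.integer,
            χ (Ideal.Quotient.mk (powIdeal v n) x) = ψ (Tr (b * (x : F)))) ∧
        (∀ b₁ b₂ : F,
          v b₁ ≤ ((ofAdd ((n : ℤ) + ℓ) : Multiplicative ℤ) : ZM0) →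
          v b₂ ≤ ((ofAdd ((n : ℤ) + ℓ) : Multiplicative ℤ) : ZM0) →
          (∀ x : v.integer,
            χ (Ideal.Quotient.mk (powIdeal v n) x) = ψ (Tr (b₁ * (x : F)))) →
          (∀ x : v.integer,
            χ (Ideal.Quotient.mk (powIdeal v n) x) = ψ (Tr (b₂ * (x : F)))) →
          v (b₁ - b₂) ≤ ((ofAdd (ℓ : ℤ) : Multiplicative ℤ) : ZM0))) ∧
    Nonempty
      ((↥(fracIdeal v (-(n : ℤ) - ℓ)) ⧸
          (fracIdeal v (-(ℓ : ℤ))).addSubgroupOf (fracIdeal v (-(n : ℤ) - ℓ))) ≃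
        AddChar (ResRing v n) ℂ) := by
  have hψ : ∀ b : F, v b ≤ ((ofAdd (ℓ : ℤ) : Multiplicative ℤ) : ZM0) →
      ∀ x : F, v x ≤ 1 → ψ (Tr (b * x)) = 1 := fun b hb => (hℓ b).mpr hb
  -- injectivity of the character map
  have hinj : Function.Injective (LCA.charMap v Tr ψ n ℓ hψ) := by
    intro q₁ q₂
    refine Quotient.inductionOn₂' q₁ q₂ (fun b₁ b₂ h => ?_)
    have key : ∀ x : F, v x ≤ 1 → ψ (Tr (((b₁ : F) - b₂) * x)) = 1 := by
      intro x hx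
      have h1 := DFunLike.congr_fun h (Ideal.Quotient.mk (powIdeal v n) ⟨x, hx⟩)
      exact LCA.psi_cancel Tr ψ _ _ _ h1
    have hd := (hℓ _).mp key
    refine Quotient.sound' (QuotientAddGroup.leftRel_apply.mpr
      (AddSubgroup.mem_addSubgroupOf.mpr ?_))
    show ((-b₁ + b₂ : ↥(fracIdeal v (-(n : ℤ) - ℓ))) : F) ∈ fracIdeal v (-(ℓ : ℤ))
    rw [LCA.mem_fracIdeal, neg_neg]
    have e : ((-b₁ + b₂ : ↥(fracIdeal v (-(n : ℤ) - ℓ))) : F) = -((b₁ : F) - b₂) := by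
      push_cast; ring
    rw [e, v.map_neg]
    exact hd
  -- finiteness and cardinalities
  haveI := LCA.finite_quot v hv n
  haveI hfinR : Finite (ResRing v n) := Finite.of_equiv _ (LCA.resRingEquiv v n).symm
  haveI : Fintype (ResRing v n) := Fintype.ofFinite _
  obtain ⟨c, hc⟩ := hv ((ofAdd (-(n : ℤ) - ℓ) : Multiplicative ℤ) : ZM0)
  have e1 := LCA.quotCongr v (m := -(n : ℤ) - ℓ) (m' := -(ℓ : ℤ)) (M := 0) (M' := (n : ℤ)) c hc (by ring) (by ring)
  have e2 := e1.trans (LCA.resRingEquiv v n).symm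
  have hcard : Nat.card (↥(fracIdeal v (-(n : ℤ) - ℓ)) ⧸
      (fracIdeal v (-(ℓ : ℤ))).addSubgroupOf (fracIdeal v (-(n : ℤ) - ℓ)))
      = Nat.card (AddChar (ResRing v n) ℂ) := by
    rw [Nat.card_congr e2, Nat.card_eq_fintype_card, Nat.card_eq_fintype_card, AddChar.card_eq]
  haveI : Finite (AddChar (ResRing v n) ℂ) := Finite.of_fintype _
  have hbij : Function.Bijective (LCA.charMap v Tr ψ n ℓ hψ) :=
    (Nat.bijective_iff_injective_and_card _).mpr ⟨hinj, hcard⟩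
  refine ⟨fun χ => ⟨?_, ?_⟩, ⟨Equiv.ofBijective _ hbij⟩⟩
  · -- existence
    obtain ⟨q, hq⟩ := hbij.surjective χ
    obtain ⟨b, rfl⟩ := Quotient.exists_rep q
    refine ⟨(b : F), ?_, ?_⟩
    · have h2 := LCA.mem_fracIdeal.mp b.2
      have e : -(-(n : ℤ) - ℓ) = (n : ℤ) + ℓ := by ring
      rwa [e] at h2
    · intro x
      rw [← hq]
      rfl
  · -- uniqueness
    intro b₁ b₂ hb₁ hb₂ h₁ h₂
    refine (hℓ _).mp (fun x hx => ?_)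
    refine LCA.psi_cancel Tr ψ _ _ _ ?_
    exact (h₁ ⟨x, hx⟩).symm.trans (h₂ ⟨x, hx⟩)

end
end

section
/- For every root α in an irreducible root system Φ with base Δ, there exists a simple root γ ∈ Δ such that ⟨α, γ⟩ ∈ {1, −1, 2, −2}. -/
open scoped RealInnerProductSpace

noncomputable section

variable {V : Type*} [NormedAddCommGroup V] [InnerProductSpace ℝ V]

/-- The Cartan pairing `⟨α, β⟩ = 2 (α, β) / (β, β)`. -/
def cpair (α β : V) : ℝ := 2 * ⟪α, β⟫ / ⟪β, β⟫

/-- Axioms for a (reduced, crystallographic) root system `Φ` in a real inner product space. -/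
structure IsRootSystem (Φ : Set V) : Prop where
  finite : Φ.Finite
  nonzero : (0 : V) ∉ Φ
  spans : Submodule.span ℝ Φ = ⊤
  neg_mem : ∀ α ∈ Φ, -α ∈ Φ
  reduced : ∀ α ∈ Φ, ∀ t : ℝ, t • α ∈ Φ → t = 1 ∨ t = -1
  pairing_int : ∀ α ∈ Φ, ∀ β ∈ Φ, ∃ k : ℤ, cpair α β = k
  reflect_mem : ∀ α ∈ Φ, ∀ β ∈ Φ, α - cpair α β • β ∈ Φ

/-- `Φ` is irreducible: it cannot be split into two nonempty mutually orthogonal parts. -/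
def IsIrreducibleRS (Φ : Set V) : Prop :=
  ∀ S ⊆ Φ, (∀ α ∈ S, ∀ β ∈ Φ \ S, ⟪α, β⟫ = 0) → S = ∅ ∨ S = Φ

/-- `Δ` is a base of `Φ`, with integer coordinate function `c`: every root is an integer
combination of the simple roots with all coefficients of the same sign. -/
structure IsBase (Φ Δ : Set V) (c : V → V → ℤ) : Prop where
  subset : Δ ⊆ Φ
  indep : LinearIndependent ℝ (fun δ : Δ => (δ : V))
  coords : ∀ γ ∈ Φ, γ = ∑ᶠ δ ∈ Δ, (c γ δ : ℝ) • δ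
  signs : ∀ γ ∈ Φ, (∀ δ ∈ Δ, 0 ≤ c γ δ) ∨ (∀ δ ∈ Δ, c γ δ ≤ 0)

/-- A positive root with respect to the base `Δ` (with coordinates `c`). -/
def IsPositiveRoot (Φ Δ : Set V) (c : V → V → ℤ) (γ : V) : Prop :=
  γ ∈ Φ ∧ ∀ δ ∈ Δ, 0 ≤ c γ δ

/-- The highest root with respect to the base `Δ`. -/
def IsHighestRoot (Φ Δ : Set V) (c : V → V → ℤ) (β : V) : Prop :=
  IsPositiveRoot Φ Δ c β ∧ ∀ γ ∈ Φ, ∀ δ ∈ Δ, c γ δ ≤ c β δ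

end

section Aux
variable {V : Type*} [NormedAddCommGroup V] [InnerProductSpace ℝ V]
variable {Φ Δ : Set V} {c : V → V → ℤ}

lemma RS.inner_self_pos (hΦ : IsRootSystem Φ) {β : V} (hβ : β ∈ Φ) : 0 < ⟪β, β⟫ := by
  have h1 : β ≠ 0 := by rintro rfl; exact hΦ.nonzero hβ
  have h2 : (0:ℝ) ≤ ⟪β, β⟫ := real_inner_self_nonneg
  refine h2.lt_of_ne (fun h => h1 ?_)
  exact (inner_self_eq_zero (𝕜 := ℝ)).mp h.symm

/-- Equality in Cauchy–Schwarz for two roots forces them to be equal or opposite. -/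
lemma RS.parallel (hΦ : IsRootSystem Φ) {x y : V} (hx : x ∈ Φ) (hy : y ∈ Φ)
    (h : ⟪x, y⟫ * ⟪x, y⟫ = ⟪x, x⟫ * ⟪y, y⟫) : x = y ∨ x = -y := by
  have hy0 : 0 < ⟪y, y⟫ := RS.inner_self_pos hΦ hy
  set t : ℝ := ⟪x, y⟫ / ⟪y, y⟫ with ht
  have hz : x - t • y = 0 := by
    rw [← inner_self_eq_zero (𝕜 := ℝ)]
    have hexp : ⟪x - t • y, x - t • y⟫ = ⟪x, x⟫ - 2 * t * ⟪x, y⟫ + t * t * ⟪y, y⟫ := by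
      simp only [inner_sub_left, inner_sub_right, real_inner_smul_left, real_inner_smul_right,
        real_inner_comm y x]
      ring
    rw [hexp, ht]
    field_simp
    nlinarith [h]
  have hxy : x = t • y := by rwa [sub_eq_zero] at hz
  rcases hΦ.reduced y hy t (hxy ▸ hx) with h1 | h1 <;> rw [hxy, h1] <;> simp

lemma Base.finite (hΦ : IsRootSystem Φ) (hΔ : IsBase Φ Δ c) : Δ.Finite :=
  hΦ.finite.subset hΔ.subset

/-- Coordinates of a root, as a sum over the finset of simple roots. -/
lemma Base.coords' (hΔ : IsBase Φ Δ c) (hfin : Δ.Finite) {β : V} (hβ : β ∈ Φ) :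
    β = ∑ δ ∈ hfin.toFinset, (c β δ : ℝ) • δ := by
  rw [← finsum_mem_eq_finite_toFinset_sum _ hfin]
  exact hΔ.coords β hβ

/-- Uniqueness of coordinates over the base. -/
lemma Base.unique (hΦ : IsRootSystem Φ) (hΔ : IsBase Φ Δ c) (hfin : Δ.Finite) (a b : V → ℝ)
    (h : ∑ δ ∈ hfin.toFinset, a δ • δ = ∑ δ ∈ hfin.toFinset, b δ • δ) :
    ∀ γ ∈ Δ, a γ = b γ := by
  intro γ hγ
  have h0 : ∑ δ ∈ hfin.toFinset, (a δ - b δ) • δ = 0 := by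
    simp only [sub_smul]
    rw [Finset.sum_sub_distrib, h, sub_self]
  haveI : Fintype Δ := hfin.fintype
  have h0' : ∑ x : Δ, (a (x:V) - b (x:V)) • ((fun δ : Δ => (δ : V)) x) = 0 := by
    rw [← Finset.sum_subtype hfin.toFinset (fun x => hfin.mem_toFinset) (fun v => (a v - b v) • v)]
    exact h0
  have h2 : a γ - b γ = 0 := linearIndependent_iff'.mp hΔ.indep Finset.univ
    (fun x : Δ => a (x:V) - b (x:V)) h0' ⟨γ, hγ⟩ (Finset.mem_univ _)
  linarith

open Classical in
lemma Base.single_sum (hfin : Δ.Finite) {δ : V} (hδ : δ ∈ Δ) (t : ℝ) :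
    ∑ γ ∈ hfin.toFinset, (if γ = δ then t else 0) • γ = t • δ := by
  classical
  have : ∀ γ ∈ hfin.toFinset, (if γ = δ then t else 0) • γ = if γ = δ then t • γ else 0 := by
    intro γ _; split <;> simp
  rw [Finset.sum_congr rfl this, Finset.sum_ite_eq' hfin.toFinset δ (fun γ => t • γ)]
  simp [hfin.mem_toFinset.mpr hδ]

/-- Expansion of an inner product with a root through its coordinates. -/
lemma Base.inner_expand (hΔ : IsBase Φ Δ c) (hfin : Δ.Finite) {β : V} (hβ : β ∈ Φ) (x : V) :
    ⟪x, β⟫ = ∑ δ ∈ hfin.toFinset, (c β δ : ℝ) * ⟪x, δ⟫ := by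
  conv_lhs => rw [Base.coords' hΔ hfin hβ]
  rw [inner_sum]
  simp [real_inner_smul_right]

/-- Analysis of a "bad" pairing: if `cpair α γ ∉ {±1, ±2}` but `(α,γ) ≠ 0`, then we are in
the `G₂`-like configuration. -/
lemma RS.bad_pairing (hΦ : IsRootSystem Φ) {α γ : V} (hα : α ∈ Φ) (hγ : γ ∈ Φ)
    (hbad : cpair α γ ∉ ({1, -1, 2, -2} : Set ℝ)) (hne : ⟪α, γ⟫ ≠ 0) :
    ⟪γ, γ⟫ = ⟪α, α⟫ / 3 ∧
      ((⟪α, γ⟫ = ⟪α, α⟫ / 2 ∧ cpair α γ = 3) ∨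
        (⟪α, γ⟫ = -(⟪α, α⟫ / 2) ∧ cpair α γ = -3)) := by
  have hA : 0 < ⟪α, α⟫ := RS.inner_self_pos hΦ hα
  have hG : 0 < ⟪γ, γ⟫ := RS.inner_self_pos hΦ hγ
  obtain ⟨k, hk⟩ := hΦ.pairing_int α hα γ hγ
  obtain ⟨k', hk'⟩ := hΦ.pairing_int γ hγ α hα
  rw [cpair] at hk hk'
  rw [real_inner_comm α γ] at hk'
  have hPk : 2 * ⟪α, γ⟫ = k * ⟪γ, γ⟫ := by
    field_simp at hk; linarith
  have hPk' : 2 * ⟪α, γ⟫ = k' * ⟪α, α⟫ := by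
    field_simp at hk'; linarith
  have hCS : ⟪α, γ⟫ * ⟪α, γ⟫ ≤ ⟪α, α⟫ * ⟪γ, γ⟫ := real_inner_mul_inner_self_le α γ
  have hprodR : (k : ℝ) * k' * (⟪γ, γ⟫ * ⟪α, α⟫) = 4 * (⟪α, γ⟫ * ⟪α, γ⟫) := by
    linear_combination (-(2 * ⟪α, γ⟫)) * hPk + (-((k:ℝ) * ⟪γ, γ⟫)) * hPk'
  have hGA : (0:ℝ) < ⟪γ, γ⟫ * ⟪α, α⟫ := mul_pos hG hA
  have hle4R : (k : ℝ) * k' ≤ 4 := by nlinarith [hCS, hprodR, hGA]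
  have hPP : (0:ℝ) < ⟪α, γ⟫ * ⟪α, γ⟫ := mul_self_pos.mpr hne
  have hposR : (0 : ℝ) < (k : ℝ) * k' := by nlinarith [hprodR, hGA, hPP]
  have hle4 : k * k' ≤ 4 := by exact_mod_cast hle4R
  have hpos : 0 < k * k' := by exact_mod_cast hposR
  have hk3 : k ≤ -3 ∨ 3 ≤ k := by
    have h1 : (k:ℝ) ≠ 1 := by intro h; exact hbad (by rw [cpair, hk, h]; left; rfl)
    have h2 : (k:ℝ) ≠ -1 := by intro h; exact hbad (by rw [cpair, hk, h]; right; left; rfl)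
    have h3 : (k:ℝ) ≠ 2 := by intro h; exact hbad (by rw [cpair, hk, h]; right; right; left; rfl)
    have h4 : (k:ℝ) ≠ -2 := by intro h; exact hbad (by rw [cpair, hk, h]; right; right; right; rfl)
    have h1' : k ≠ 1 := by intro h; apply h1; rw [h]; norm_num
    have h2' : k ≠ -1 := by intro h; apply h2; rw [h]; push_cast; ring
    have h3' : k ≠ 2 := by intro h; apply h3; rw [h]; push_cast; ring
    have h4' : k ≠ -2 := by intro h; apply h4; rw [h]; push_cast; ring
    have h0' : k ≠ 0 := by
      intro h; apply hne; rw [h] at hPk; push_cast at hPk; linarith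
    omega
  -- rule out the equality case k*k' = 4
  have hne4 : k * k' ≠ 4 := by
    intro h44
    have hc : ((k * k' : ℤ) : ℝ) = 4 := by rw [h44]; norm_num
    push_cast at hc
    have heq : ⟪α, γ⟫ * ⟪α, γ⟫ = ⟪α, α⟫ * ⟪γ, γ⟫ := by nlinarith [hprodR]
    rcases RS.parallel hΦ hα hγ heq with h | h
    · apply hbad
      rw [cpair, h]
      have h2 : 2 * ⟪γ, γ⟫ / ⟪γ, γ⟫ = 2 := by field_simp
      rw [h2]; right; right; left; rfl
    · apply hbad
      rw [cpair, h]
      have h2 : 2 * ⟪-γ, γ⟫ / ⟪γ, γ⟫ = -2 := by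
        rw [inner_neg_left]; field_simp
      rw [h2]; right; right; right; rfl
  -- hence k = ±3, k' = ±1 with matching signs
  have hk'val : (k = 3 ∧ k' = 1) ∨ (k = -3 ∧ k' = -1) := by
    rcases hk3 with h | h
    · have ha : k' ≤ -1 := by nlinarith [hpos]
      have hb : -2 < k' := by nlinarith [hle4]
      have hc : k' = -1 := by omega
      subst hc
      right; exact ⟨by omega, rfl⟩
    · have ha : 1 ≤ k' := by nlinarith [hpos]
      have hb : k' < 2 := by nlinarith [hle4]
      have hc : k' = 1 := by omega
      subst hc
      left; exact ⟨by omega, rfl⟩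
  rcases hk'val with ⟨h3, h1⟩ | ⟨h3, h1⟩
  · subst h3; subst h1
    push_cast at hPk hPk'
    refine ⟨by linarith, Or.inl ⟨by linarith, ?_⟩⟩
    rw [cpair, hk]; norm_num
  · subst h3; subst h1
    push_cast at hPk hPk'
    refine ⟨by linarith, Or.inr ⟨by linarith, ?_⟩⟩
    rw [cpair, hk]; norm_num

open Classical in
lemma RS.core (hΦ : IsRootSystem Φ) (hΔ : IsBase Φ Δ c) {α : V} (hα : α ∈ Φ)
    (hpos : ∀ γ ∈ Δ, 0 ≤ c α γ)
    (hbad : ∀ γ ∈ Δ, cpair α γ ∉ ({1, -1, 2, -2} : Set ℝ)) : False := by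
  have hfin : Δ.Finite := Base.finite hΦ hΔ
  set s := hfin.toFinset with hs
  have hA : 0 < ⟪α, α⟫ := RS.inner_self_pos hΦ hα
  -- find a simple root δ with ⟪α, δ⟫ > 0
  have hexp : ⟪α, α⟫ = ∑ δ ∈ s, (c α δ : ℝ) * ⟪α, δ⟫ := Base.inner_expand hΔ hfin hα α
  have hex : ∃ δ ∈ s, 0 < (c α δ : ℝ) * ⟪α, δ⟫ := by
    by_contra hcon
    push_neg at hcon
    have := Finset.sum_nonpos hcon
    linarith
  obtain ⟨δ, hδs, hδpos⟩ := hex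
  have hδΔ : δ ∈ Δ := hfin.mem_toFinset.mp hδs
  have hδΦ : δ ∈ Φ := hΔ.subset hδΔ
  have hcδ : (0:ℝ) ≤ (c α δ : ℝ) := by exact_mod_cast hpos δ hδΔ
  have hαδ : 0 < ⟪α, δ⟫ := by
    rcases lt_or_ge 0 ⟪α, δ⟫ with h | h
    · exact h
    · exfalso; nlinarith
  obtain ⟨hGδ, hsplitδ⟩ := RS.bad_pairing hΦ hα hδΦ (hbad δ hδΔ) (ne_of_gt hαδ)
  have hPδ1 : ⟪α, δ⟫ = ⟪α, α⟫ / 2 := by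
    rcases hsplitδ with h | h
    · exact h.1
    · exfalso; linarith [h.1]
  have hPδ2 : cpair α δ = 3 := by
    rcases hsplitδ with h | h
    · exact h.2
    · exfalso; linarith [h.1]
  -- the root lam = α - 3δ
  have hlamΦ : α - (3:ℝ) • δ ∈ Φ := by
    have := hΦ.reflect_mem α hα δ hδΦ
    rwa [hPδ2] at this
  set lam := α - (3:ℝ) • δ with hlam
  have hlamrep : lam = ∑ γ ∈ s, ((c α γ : ℝ) + (if γ = δ then (-3:ℝ) else 0)) • γ := by
    simp only [add_smul]
    rw [Finset.sum_add_distrib, ← Base.coords' hΔ hfin hα, Base.single_sum hfin hδΔ (-3:ℝ)]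
    rw [hlam]; module
  have hlamcoords : ∀ γ ∈ Δ, (c lam γ : ℝ) = (c α γ : ℝ) + (if γ = δ then (-3:ℝ) else 0) :=
    Base.unique hΦ hΔ hfin _ _ (by rw [← Base.coords' hΔ hfin hlamΦ, ← hlamrep])
  rcases hΔ.signs lam hlamΦ with hl | hl
  · -- lam is a positive root: find δ' with ⟪α, δ'⟫ < 0
    have h1 : ⟪α, lam⟫ = ∑ γ ∈ s, (c lam γ : ℝ) * ⟪α, γ⟫ := Base.inner_expand hΔ hfin hlamΦ α
    have h2 : ⟪α, lam⟫ = -(⟪α, α⟫ / 2) := by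
      rw [hlam, inner_sub_right, real_inner_smul_right, hPδ1]; ring
    have hex' : ∃ γ ∈ s, (c lam γ : ℝ) * ⟪α, γ⟫ < 0 := by
      by_contra hcon
      push_neg at hcon
      have := Finset.sum_nonneg hcon
      linarith
    obtain ⟨δ', hδ's, hδ'neg⟩ := hex'
    have hδ'Δ : δ' ∈ Δ := hfin.mem_toFinset.mp hδ's
    have hδ'Φ : δ' ∈ Φ := hΔ.subset hδ'Δ
    have hclam : (0:ℝ) ≤ (c lam δ' : ℝ) := by exact_mod_cast hl δ' hδ'Δ
    have hαδ' : ⟪α, δ'⟫ < 0 := by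
      rcases lt_or_ge ⟪α, δ'⟫ 0 with h | h
      · exact h
      · exfalso; nlinarith
    obtain ⟨hGδ', hsplitδ'⟩ := RS.bad_pairing hΦ hα hδ'Φ (hbad δ' hδ'Δ) (ne_of_lt hαδ')
    have hPδ'1 : ⟪α, δ'⟫ = -(⟪α, α⟫ / 2) := by
      rcases hsplitδ' with h | h
      · exfalso; linarith [h.1]
      · exact h.1
    have hneδδ' : δ ≠ δ' := by
      intro h; rw [← h] at hPδ'1; linarith
    -- analyse K = ⟪δ, δ'⟫
    have hKCS : ⟪δ, δ'⟫ * ⟪δ, δ'⟫ ≤ (⟪α, α⟫/3) * (⟪α, α⟫/3) := by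
      have := real_inner_mul_inner_self_le δ δ'
      rwa [hGδ, hGδ'] at this
    rcases eq_or_lt_of_le hKCS with hKeq | hKlt
    · -- equality: δ = ±δ', both impossible
      have hpar : ⟪δ, δ'⟫ * ⟪δ, δ'⟫ = ⟪δ, δ⟫ * ⟪δ', δ'⟫ := by rw [hGδ, hGδ']; linarith
      rcases RS.parallel hΦ hδΦ hδ'Φ hpar with h | h
      · exact hneδδ' h
      · -- δ = -δ' contradicts linear independence
        have hrep1 : ∑ γ ∈ s, (if γ = δ then (1:ℝ) else 0) • γ
            = ∑ γ ∈ s, (if γ = δ' then (-1:ℝ) else 0) • γ := by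
          rw [Base.single_sum hfin hδΔ (1:ℝ), Base.single_sum hfin hδ'Δ (-1:ℝ)]
          rw [one_smul, neg_smul, one_smul]; exact h
        have := Base.unique hΦ hΔ hfin _ _ hrep1 δ hδΔ
        simp [hneδδ'] at this
    · -- strict: k := cpair δ δ' ∈ {-1, 0, 1}
      obtain ⟨k, hk⟩ := hΦ.pairing_int δ hδΦ δ' hδ'Φ
      rw [cpair, hGδ'] at hk
      have hKval : ⟪δ, δ'⟫ = (k:ℝ) * ⟪α, α⟫ / 6 := by
        field_simp at hk; linarith
      have hKsq : ⟪δ, δ'⟫ * ⟪δ, δ'⟫ = (k:ℝ) * (k:ℝ) * (⟪α, α⟫ * ⟪α, α⟫) / 36 := by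
        rw [hKval]; ring
      have hk2R : (k:ℝ) * (k:ℝ) < 4 := by nlinarith [hKlt, hKsq, mul_pos hA hA]
      have hk2 : k * k < 4 := by exact_mod_cast hk2R
      have hkcases : k = -1 ∨ k = 0 ∨ k = 1 := by
        have hb1 : -1 ≤ k := by nlinarith [sq_nonneg (k + 2)]
        have hb2 : k ≤ 1 := by nlinarith [sq_nonneg (k - 2)]
        omega
      -- the short root μ = α - δ
      have hcomm : ⟪δ, α⟫ = ⟪α, δ⟫ := real_inner_comm _ _
      have hcpδα : cpair δ α = 1 := by
        rw [cpair, hcomm, hPδ1]; field_simp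
      have hμΦ' : δ - α ∈ Φ := by
        have := hΦ.reflect_mem δ hδΦ α hα
        rwa [hcpδα, one_smul] at this
      have hμΦ : α - δ ∈ Φ := by
        have := hΦ.neg_mem _ hμΦ'
        rwa [neg_sub] at this
      have hμμ : ⟪α - δ, α - δ⟫ = ⟪α, α⟫ / 3 := by
        simp only [inner_sub_left, inner_sub_right]
        linarith [hcomm, hPδ1, hGδ]
      rcases hkcases with hkv | hkv | hkv
      · -- k = -1 : μ is parallel to δ'
        subst hkv
        have hKv : ⟪δ, δ'⟫ = -(⟪α, α⟫ / 6) := by rw [hKval]; push_cast; ring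
        have hμδ' : ⟪α - δ, δ'⟫ = -(⟪α, α⟫ / 3) := by
          rw [inner_sub_left, hPδ'1, hKv]; ring
        have hpar : ⟪α - δ, δ'⟫ * ⟪α - δ, δ'⟫ = ⟪α - δ, α - δ⟫ * ⟪δ', δ'⟫ := by
          rw [hμδ', hμμ, hGδ']; ring
        rcases RS.parallel hΦ hμΦ hδ'Φ hpar with h | h
        · rw [h] at hμδ'
          have : (0:ℝ) < ⟪δ', δ'⟫ := RS.inner_self_pos hΦ hδ'Φ
          rw [hGδ'] at this
          rw [hGδ'] at hμδ'
          linarith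
        · -- α = δ - δ' contradicts positivity of coordinates
          have hαrep : α = δ - δ' := by
            rw [sub_eq_iff_eq_add] at h
            rw [h]; abel
          have hrep1 : ∑ γ ∈ s, (c α γ : ℝ) • γ
              = ∑ γ ∈ s, ((if γ = δ then (1:ℝ) else 0) + (if γ = δ' then (-1:ℝ) else 0)) • γ := by
            simp only [add_smul]
            rw [Finset.sum_add_distrib, Base.single_sum hfin hδΔ (1:ℝ),
              Base.single_sum hfin hδ'Δ (-1:ℝ), ← Base.coords' hΔ hfin hα, hαrep]
            module
          have := Base.unique hΦ hΔ hfin _ _ hrep1 δ' hδ'Δ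
          rw [if_neg (fun hh => hneδδ' hh.symm), if_pos rfl] at this
          have hge : (0:ℝ) ≤ (c α δ' : ℝ) := by exact_mod_cast hpos δ' hδ'Δ
          rw [this] at hge
          norm_num at hge
      · -- k = 0 : ρ = δ' + α violates Cauchy-Schwarz against δ
        subst hkv
        have hKv : ⟪δ, δ'⟫ = 0 := by rw [hKval]; push_cast; ring
        have hcomm' : ⟪δ', α⟫ = ⟪α, δ'⟫ := real_inner_comm _ _
        have hcpδ'α : cpair δ' α = -1 := by
          rw [cpair, hcomm', hPδ'1]; field_simp
        have hρΦ : δ' + α ∈ Φ := by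
          have := hΦ.reflect_mem δ' hδ'Φ α hα
          rw [hcpδ'α, neg_smul, one_smul, sub_neg_eq_add] at this
          exact this
        have hρρ : ⟪δ' + α, δ' + α⟫ = ⟪α, α⟫ / 3 := by
          simp only [inner_add_left, inner_add_right]
          linarith [hcomm', hPδ'1, hGδ']
        have hρδ : ⟪δ' + α, δ⟫ = ⟪α, α⟫ / 2 := by
          have hc1 : ⟪δ', δ⟫ = ⟪δ, δ'⟫ := real_inner_comm _ _
          rw [inner_add_left]
          linarith [hc1, hKv, hPδ1]
        have := real_inner_mul_inner_self_le (δ' + α) δ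
        rw [hρρ, hρδ, hGδ] at this
        linarith [mul_pos hA hA]
      · -- k = 1 : μ = α - δ violates Cauchy-Schwarz against δ'
        subst hkv
        have hKv : ⟪δ, δ'⟫ = ⟪α, α⟫ / 6 := by rw [hKval]; push_cast; ring
        have hμδ' : ⟪α - δ, δ'⟫ = -(2 * ⟪α, α⟫ / 3) := by
          rw [inner_sub_left, hPδ'1, hKv]; ring
        have := real_inner_mul_inner_self_le (α - δ) δ'
        rw [hμμ, hμδ', hGδ'] at this
        linarith [mul_pos hA hA]
  · -- lam has all coordinates ≤ 0 : then α = (c α δ) • δ, i.e. α = ±δ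
    have hzero : ∀ γ ∈ Δ, γ ≠ δ → (c α γ : ℝ) = 0 := by
      intro γ hγ hne
      have h1 := hlamcoords γ hγ
      rw [if_neg hne, add_zero] at h1
      have h2 : (c lam γ : ℝ) ≤ 0 := by exact_mod_cast hl γ hγ
      have h3 : (0:ℝ) ≤ (c α γ : ℝ) := by exact_mod_cast hpos γ hγ
      linarith
    have hαrep : α = (c α δ : ℝ) • δ := by
      have h1 : ∑ γ ∈ s, ((c α γ : ℝ)) • γ = ∑ γ ∈ s, (if γ = δ then ((c α δ : ℝ)) else 0) • γ := by
        apply Finset.sum_congr rfl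
        intro γ hγ
        by_cases hc : γ = δ
        · rw [hc, if_pos rfl]
        · rw [if_neg hc, hzero γ (hfin.mem_toFinset.mp hγ) hc]
      exact (Base.coords' hΔ hfin hα).trans (h1.trans (Base.single_sum hfin hδΔ _))
    have hred := hΦ.reduced δ hδΦ ((c α δ : ℝ)) (by rw [← hαrep]; exact hα)
    rcases hred with h | h
    · rw [h, one_smul] at hαrep
      rw [hαrep] at hPδ1 hA
      rw [hGδ] at hPδ1
      rw [hαrep] at hGδ
      linarith
    · rw [h, neg_smul, one_smul] at hαrep
      rw [hαrep] at hαδ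
      rw [inner_neg_left] at hαδ
      have := RS.inner_self_pos hΦ hδΦ
      linarith

end Aux

section
variable {V : Type*} [NormedAddCommGroup V] [InnerProductSpace ℝ V]

/-- Every root of an irreducible root system pairs with some simple root
to a value in `{1, -1, 2, -2}`. -/
theorem exists_simple_root_small_pairing (Φ Δ : Set V) (c : V → V → ℤ)
    (hΦ : IsRootSystem Φ) (hirr : IsIrreducibleRS Φ) (hΔ : IsBase Φ Δ c)
    (α : V) (hα : α ∈ Φ) :
    ∃ γ ∈ Δ, cpair α γ ∈ ({1, -1, 2, -2} : Set ℝ) := by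
  by_contra hcon
  push_neg at hcon
  have hfin : Δ.Finite := Base.finite hΦ hΔ
  rcases hΔ.signs α hα with hp | hn
  · exact RS.core hΦ hΔ hα hp hcon
  · have hnegΦ : -α ∈ Φ := hΦ.neg_mem α hα
    have hrep : ∑ γ ∈ hfin.toFinset, ((c (-α) γ : ℝ)) • γ
        = ∑ γ ∈ hfin.toFinset, (-(c α γ : ℝ)) • γ := by
      rw [← Base.coords' hΔ hfin hnegΦ]
      simp only [neg_smul]
      rw [Finset.sum_neg_distrib, ← Base.coords' hΔ hfin hα]
    have hcoords := Base.unique hΦ hΔ hfin _ _ hrep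
    have hp' : ∀ γ ∈ Δ, 0 ≤ c (-α) γ := by
      intro γ hγ
      have h1 := hcoords γ hγ
      have h2 : (c α γ : ℝ) ≤ 0 := by exact_mod_cast hn γ hγ
      have h3 : (0:ℝ) ≤ (c (-α) γ : ℝ) := by rw [h1]; linarith
      exact_mod_cast h3
    have hbad' : ∀ γ ∈ Δ, cpair (-α) γ ∉ ({1, -1, 2, -2} : Set ℝ) := by
      intro γ hγ hmem
      apply hcon γ hγ
      have hneg : cpair (-α) γ = -(cpair α γ) := by
        rw [cpair, cpair, inner_neg_left]; ring
      rw [hneg] at hmem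
      simp only [Set.mem_insert_iff, Set.mem_singleton_iff] at hmem ⊢
      rcases hmem with h | h | h | h
      · right; left; linarith
      · left; linarith
      · right; right; right; linarith
      · right; right; left; linarith
    exact RS.core hΦ hΔ hnegΦ hp' hbad'


end
end

section
/- Let U be a finite two-step nilpotent group and χ a generic character of Z(U), i.e., the pairing ⟨xZ(U), yZ(U)⟩_χ := χ([x,y]) is non-degenerate. If A is a polarizing subgroup (Z(U) ≤ A ≤ U with Ā = Ā^⊥ for the pairing) and ρ is an irreducible representation of U with central character χ, then dim ρ = [U : A]. -/
open scoped commutatorElement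

open Module Submodule

section Aux

variable {U : Type*} [Group U]

/-- Bilinearity of the commutator, left argument (two-step nilpotent groups). -/
lemma svn_comm_mul_left (h2 : ∀ x y : U, ⁅x, y⁆ ∈ Subgroup.center U) (x y z : U) :
    ⁅x * y, z⁆ = ⁅x, z⁆ * ⁅y, z⁆ := by
  have hc : ∀ g : U, g * ⁅y, z⁆ = ⁅y, z⁆ * g := fun g =>
    Subgroup.mem_center_iff.mp (h2 y z) g
  have key : ⁅x * y, z⁆ = x * ⁅y, z⁆ * x⁻¹ * ⁅x, z⁆ := by
    simp only [commutatorElement_def]; group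
  rw [key, hc x, mul_assoc ⁅y, z⁆ x x⁻¹, mul_inv_cancel, mul_one, hc ⁅x, z⁆]

variable (h2 : ∀ x y : U, ⁅x, y⁆ ∈ Subgroup.center U) (χ : Subgroup.center U →* ℂˣ)

/-- The commutator pairing with values in `ℂˣ`. -/
noncomputable def svnB (x y : U) : ℂˣ := χ ⟨⁅x, y⁆, h2 x y⟩

lemma svnB_mul_left (x y z : U) : svnB h2 χ (x * y) z = svnB h2 χ x z * svnB h2 χ y z := by
  unfold svnB
  rw [← map_mul]
  congr 1
  exact Subtype.ext (svn_comm_mul_left h2 x y z)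

lemma svnB_swap (x y : U) : svnB h2 χ x y = (svnB h2 χ y x)⁻¹ := by
  unfold svnB
  rw [← map_inv]
  congr 1
  exact Subtype.ext (commutatorElement_inv y x).symm

lemma svnB_one_left (y : U) : svnB h2 χ 1 y = 1 := by
  unfold svnB
  have h : (⟨⁅(1 : U), y⁆, h2 1 y⟩ : Subgroup.center U) = 1 := Subtype.ext (by simp)
  rw [h, map_one]

lemma svnB_inv_left (x y : U) : svnB h2 χ x⁻¹ y = (svnB h2 χ x y)⁻¹ := by
  have h := svnB_mul_left h2 χ x⁻¹ x y
  rw [inv_mul_cancel, svnB_one_left] at h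
  exact eq_inv_of_mul_eq_one_left h.symm

lemma svnB_inv_right (x y : U) : svnB h2 χ x y⁻¹ = (svnB h2 χ x y)⁻¹ := by
  rw [svnB_swap, svnB_inv_left, svnB_swap h2 χ y x, inv_inv]

/-- Orthogonality: a nontrivial `ℂˣ`-character of a finite group sums to zero. -/
lemma svn_sum_char_eq_zero {G : Type*} [Group G] [Fintype G] (η : G →* ℂˣ) (b : G)
    (hb : η b ≠ 1) : ∑ g : G, ((η g : ℂˣ) : ℂ) = 0 := by
  have h : ∑ g : G, ((η (b * g) : ℂˣ) : ℂ) = ∑ g : G, ((η g : ℂˣ) : ℂ) :=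
    Equiv.sum_comp (Equiv.mulLeft b) (fun g => ((η g : ℂˣ) : ℂ))
  simp only [map_mul, Units.val_mul, ← Finset.mul_sum] at h
  have hb' : ((η b : ℂˣ) : ℂ) ≠ 1 := fun h1 => hb (Units.ext h1)
  by_contra hne
  exact hb' (mul_right_cancel₀ hne (by rw [h, one_mul]))

end Aux

/-- **Stone–von Neumann, dimension formula.** If `χ` is a generic character of
the center of a finite two-step nilpotent group `U`, `A` a polarizing subgroup, and `ρ` an
irreducible representation of `U` with central character `χ`, then `dim ρ = [U : A]`. -/
theorem stone_von_neumann_dim (U : Type*) [Group U] [Finite U]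
    (h2 : ∀ x y : U, ⁅x, y⁆ ∈ Subgroup.center U)
    (χ : Subgroup.center U →* ℂˣ)
    -- `χ` is generic: the pairing `χ([x,y])` on `U/Z(U)` is non-degenerate
    (hgen : ∀ x : U, (∀ y : U, χ ⟨⁅x, y⁆, h2 x y⟩ = 1) → x ∈ Subgroup.center U)
    -- `A` is a polarizing subgroup: `Z(U) ≤ A` and `Ā = Ā^⊥`
    (A : Subgroup U) (hZA : Subgroup.center U ≤ A)
    (hpol : ∀ x : U, (∀ a : U, a ∈ A → χ ⟨⁅x, a⁆, h2 x a⟩ = 1) ↔ x ∈ A)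
    -- `ρ` is an irreducible representation of `U` with central character `χ`
    (W : Type*) [AddCommGroup W] [Module ℂ W] [FiniteDimensional ℂ W] [Nontrivial W]
    (ρ : Representation ℂ U W)
    (hirr : ∀ S : Submodule ℂ W, (∀ g : U, ∀ w ∈ S, ρ g w ∈ S) → S = ⊥ ∨ S = ⊤)
    (hcent : ∀ z : Subgroup.center U, ∀ w : W, ρ (z : U) w = (χ z : ℂ) • w) :
    Module.finrank ℂ W = A.index := by
  classical
  haveI : Fintype U := Fintype.ofFinite U
  haveI : Fintype (U ⧸ A) := Fintype.ofFinite _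
  haveI : Fintype A := Fintype.ofFinite A
  set B : U → U → ℂˣ := svnB h2 χ with hBdef
  have hmul : ∀ (x y : U) (w : W), ρ (x * y) w = ρ x (ρ y w) := by
    intro x y w; rw [map_mul]; rfl
  have hinvρ : ∀ (g : U) (w : W), ρ g w = 0 → w = 0 := by
    intro g w h
    have h' : ρ (g⁻¹ * g) w = 0 := by rw [hmul, h, map_zero]
    rwa [inv_mul_cancel, map_one, Module.End.one_apply] at h'
  -- ρ restricted to A is a commuting family
  have hcommA : ∀ a b : U, a ∈ A → b ∈ A → ∀ w : W, ρ a (ρ b w) = ρ b (ρ a w) := by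
    intro a b ha hb w
    have h1 : a * b = ⁅a, b⁆ * (b * a) := by simp only [commutatorElement_def]; group
    have h2' : χ ⟨⁅a, b⁆, h2 a b⟩ = 1 := (hpol a).mpr ha b hb
    calc ρ a (ρ b w) = ρ (a * b) w := (hmul a b w).symm
      _ = ρ ⁅a, b⁆ (ρ (b * a) w) := by rw [h1, hmul]
      _ = ((χ ⟨⁅a, b⁆, h2 a b⟩ : ℂˣ) : ℂ) • ρ (b * a) w := hcent ⟨⁅a, b⁆, h2 a b⟩ _
      _ = ρ (b * a) w := by rw [h2', Units.val_one, one_smul]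
      _ = ρ b (ρ a w) := hmul b a w
  -- a minimal nonzero A-invariant submodule
  set P : Submodule ℂ W → Prop :=
    fun S => S ≠ ⊥ ∧ ∀ a ∈ A, ∀ w ∈ S, ρ a w ∈ S with hPdef
  have hPtop : P ⊤ := ⟨top_ne_bot, fun _ _ _ _ => mem_top⟩
  have hQex : ∃ n : ℕ, ∃ S : Submodule ℂ W, P S ∧ finrank ℂ S = n := ⟨_, ⊤, hPtop, rfl⟩
  obtain ⟨S, hSP, hSrank⟩ := Nat.find_spec hQex
  have hSmin : ∀ S' : Submodule ℂ W, P S' → finrank ℂ S ≤ finrank ℂ S' := by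
    intro S' hS'
    rw [hSrank]
    exact Nat.find_min' hQex ⟨S', hS', rfl⟩
  -- every a ∈ A acts as a scalar on S
  have hscal : ∀ a : U, a ∈ A → ∃ μ : ℂ, ∀ w ∈ S, ρ a w = μ • w := by
    intro a ha
    have hinv : ∀ x ∈ S, ρ a x ∈ S := hSP.2 a ha
    let f : S →ₗ[ℂ] S := (ρ a).restrict hinv
    haveI : Nontrivial S := Submodule.nontrivial_iff_ne_bot.mpr hSP.1
    obtain ⟨μ, hμ⟩ := Module.End.exists_eigenvalue f
    obtain ⟨v0, hv0⟩ := hμ.exists_hasEigenvector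
    set E : Submodule ℂ W := (Module.End.eigenspace f μ).map S.subtype with hEdef
    have hEle : E ≤ S := Submodule.map_subtype_le _ _
    have hEeig : ∀ x ∈ E, ρ a x = μ • x := by
      intro x hx
      obtain ⟨y, hy, rfl⟩ := hx
      have h1 : f y = μ • y := (Module.End.mem_eigenspace_iff).mp hy
      have h3 := congrArg (S.subtype) h1
      simpa [f, LinearMap.restrict_apply] using h3
    have hEP : P E := by
      constructor
      · intro hbot
        have hvE : (v0 : W) ∈ E := ⟨v0, hv0.1, rfl⟩
        rw [hbot, Submodule.mem_bot] at hvE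
        exact hv0.2 (Subtype.ext (by simpa using hvE))
      · intro b hb x hx
        have hxS : x ∈ S := hEle hx
        have hbxS : ρ b x ∈ S := hSP.2 b hb x hxS
        refine ⟨⟨ρ b x, hbxS⟩, Module.End.mem_eigenspace_iff.mpr ?_, rfl⟩
        apply Subtype.ext
        have h4 : ρ a (ρ b x) = μ • ρ b x := by
          rw [hcommA a b ha hb, hEeig x hx, map_smul]
        simpa [f, LinearMap.restrict_apply] using h4
    have hE : E = S := Submodule.eq_of_le_of_finrank_le hEle (hSmin E hEP)
    exact ⟨μ, fun w hw => hEeig w (hE ▸ hw)⟩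
  obtain ⟨w, hwS, hw0⟩ := Submodule.exists_mem_ne_zero_of_ne_bot hSP.1
  have huniq : ∀ c d : ℂ, c • w = d • w → c = d := fun c d h =>
    smul_left_injective ℂ hw0 h
  have hch : ∀ a : A, ∃ μ : ℂ, ρ (a : U) w = μ • w := by
    intro a
    obtain ⟨μ, hμ⟩ := hscal (a : U) a.2
    exact ⟨μ, hμ w hwS⟩
  choose lam hlam using hch
  have hlamne : ∀ a : A, lam a ≠ 0 := by
    intro a h
    apply hw0
    apply hinvρ (a : U)
    rw [hlam a, h, zero_smul]
  have hlammul : ∀ a b : A, lam (a * b) = lam a * lam b := by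
    intro a b
    apply huniq
    rw [← hlam (a * b)]
    push_cast
    rw [hmul, hlam b, map_smul, hlam a, smul_smul, mul_comm]
  -- coset representatives and translated eigenvectors
  set r : U ⧸ A → U := Quotient.out with hrdef
  have hr : ∀ t : U ⧸ A, QuotientGroup.mk (r t) = t := fun t => QuotientGroup.out_eq' t
  set v : U ⧸ A → W := fun t => ρ (r t) w with hvdef
  have hvne : ∀ t, v t ≠ 0 := fun t h => hw0 (hinvρ (r t) w h)
  -- the eigen-character of v t
  set Ψ : U ⧸ A → A → ℂˣ := fun t a => B (a : U) (r t) * Units.mk0 (lam a) (hlamne a)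
    with hΨdef
  have hΨmul : ∀ (t : U ⧸ A) (a b : A), Ψ t (a * b) = Ψ t a * Ψ t b := by
    intro t a b
    have hlm : Units.mk0 (lam (a * b)) (hlamne _) =
        Units.mk0 (lam a) (hlamne a) * Units.mk0 (lam b) (hlamne b) := by
      ext; simp [hlammul a b]
    simp only [hΨdef, hBdef, Subgroup.coe_mul, svnB_mul_left, hlm]
    exact mul_mul_mul_comm _ _ _ _
  -- eigen equation
  have heig : ∀ (t : U ⧸ A) (a : A), ρ (a : U) (v t) = ((Ψ t a : ℂˣ) : ℂ) • v t := by
    intro t a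
    set x := (a : U) with hxdef
    set c : U := ⁅x⁻¹, (r t)⁻¹⁆ with hcdef
    have hgrp : x * r t = r t * (x * c) := by
      simp only [hcdef, commutatorElement_def]; group
    have hcs : ρ c w = ((χ ⟨c, h2 x⁻¹ (r t)⁻¹⟩ : ℂˣ) : ℂ) • w := hcent ⟨c, h2 _ _⟩ w
    have hχc : χ ⟨c, h2 x⁻¹ (r t)⁻¹⟩ = B x (r t) := by
      have h1 : χ ⟨c, h2 x⁻¹ (r t)⁻¹⟩ = svnB h2 χ x⁻¹ (r t)⁻¹ := rfl
      rw [h1, svnB_inv_left, svnB_inv_right, inv_inv, hBdef]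
    calc ρ x (v t) = ρ (x * r t) w := by rw [hvdef, ← hmul]
      _ = ρ (r t) (ρ x (ρ c w)) := by rw [hgrp, hmul, hmul]
      _ = ((χ ⟨c, h2 x⁻¹ (r t)⁻¹⟩ : ℂˣ) : ℂ) • ρ (r t) (ρ x w) := by
          rw [hcs, map_smul, map_smul]
      _ = ((χ ⟨c, h2 x⁻¹ (r t)⁻¹⟩ : ℂˣ) : ℂ) • (lam a • v t) := by
          rw [show ρ x w = lam a • w from hlam a, map_smul, hvdef]
      _ = ((Ψ t a : ℂˣ) : ℂ) • v t := by
          rw [smul_smul, hχc, hΨdef]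
          simp [Units.val_mul, hxdef]
  -- characters attached to distinct cosets are distinct
  have hdist : ∀ s t : U ⧸ A, (∀ a : A, Ψ s a = Ψ t a) → s = t := by
    intro s t h
    have hB : ∀ a : A, B (a : U) (r s) = B (a : U) (r t) := by
      intro a
      have h0 := h a
      simp only [hΨdef] at h0
      exact mul_right_cancel h0
    have hx : (r s)⁻¹ * r t ∈ A := by
      apply (hpol ((r s)⁻¹ * r t)).mp
      intro a ha
      have h5 : svnB h2 χ a (r s) = svnB h2 χ a (r t) := by
        have h6 := hB ⟨a, ha⟩
        rw [hBdef] at h6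
        exact h6
      have key : B ((r s)⁻¹ * r t) a = 1 := by
        rw [hBdef, svnB_mul_left, svnB_inv_left, svnB_swap h2 χ (r s) a,
          svnB_swap h2 χ (r t) a, inv_inv, h5, mul_inv_cancel]
      exact key
    have : (QuotientGroup.mk (r s) : U ⧸ A) = QuotientGroup.mk (r t) :=
      QuotientGroup.eq.mpr hx
    rwa [hr, hr] at this
  -- linear independence via character orthogonality
  have hind : LinearIndependent ℂ v := by
    rw [Fintype.linearIndependent_iff]
    intro c hc s
    set L : W →ₗ[ℂ] W :=
      ∑ a : A, (((Ψ s a)⁻¹ : ℂˣ) : ℂ) • (ρ (a : U)) with hLdef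
    have hLv : ∀ t : U ⧸ A,
        L (v t) = (∑ a : A, (((Ψ s a)⁻¹ * Ψ t a : ℂˣ) : ℂ)) • v t := by
      intro t
      rw [hLdef, LinearMap.sum_apply]
      have hterm : ∀ a : A, ((((Ψ s a)⁻¹ : ℂˣ) : ℂ) • ρ (a : U)) (v t) =
          (((Ψ s a)⁻¹ * Ψ t a : ℂˣ) : ℂ) • v t := by
        intro a
        rw [LinearMap.smul_apply, heig t a, smul_smul]
        simp [hΨdef, Units.val_mul]
      rw [Finset.sum_congr rfl (fun a _ => hterm a), ← Finset.sum_smul]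
    have hsum : ∀ t : U ⧸ A, (∑ a : A, (((Ψ s a)⁻¹ * Ψ t a : ℂˣ) : ℂ)) =
        if t = s then (Fintype.card A : ℂ) else 0 := by
      intro t
      by_cases h : t = s
      · subst h
        simp [inv_mul_cancel]
      · rw [if_neg h]
        set η : A →* ℂˣ := MonoidHom.mk' (fun a => (Ψ s a)⁻¹ * Ψ t a) (by
          intro a b
          show (Ψ s (a * b))⁻¹ * Ψ t (a * b) = ((Ψ s a)⁻¹ * Ψ t a) * ((Ψ s b)⁻¹ * Ψ t b)
          rw [hΨmul, hΨmul, mul_inv]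
          exact mul_mul_mul_comm _ _ _ _) with hηdef
        have hnt : ∃ b : A, η b ≠ 1 := by
          by_contra hcon
          push_neg at hcon
          refine absurd (hdist s t (fun a => ?_)) (fun hst => h hst.symm)
          have h7 : (Ψ s a)⁻¹ * Ψ t a = 1 := hcon a
          exact inv_mul_eq_one.mp h7
        obtain ⟨b, hb⟩ := hnt
        exact svn_sum_char_eq_zero η b hb
    have h0 : L (∑ t : U ⧸ A, c t • v t) = 0 := by rw [hc, map_zero]
    rw [map_sum] at h0
    simp only [map_smul, hLv, hsum] at h0
    rw [Finset.sum_eq_single s (fun t _ hts => by rw [if_neg hts]; simp)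
      (fun hs => absurd (Finset.mem_univ s) hs)] at h0
    rw [if_pos rfl, smul_smul] at h0
    have hcard : (Fintype.card A : ℂ) ≠ 0 := by
      exact_mod_cast Fintype.card_ne_zero
    rcases smul_eq_zero.mp h0 with h1 | h1
    · rcases mul_eq_zero.mp h1 with h3 | h3
      · exact h3
      · exact absurd h3 hcard
    · exact absurd h1 (hvne s)
  have hge : Fintype.card (U ⧸ A) ≤ finrank ℂ W := hind.fintype_card_le_finrank
  -- spanning
  set T : Submodule ℂ W := span ℂ (Set.range v) with hTdef
  have hTinv : ∀ g : U, ∀ x ∈ T, ρ g x ∈ T := by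
    intro g x hx
    have himg : ρ g '' Set.range v ⊆ (T : Set W) := by
      rintro _ ⟨_, ⟨t, rfl⟩, rfl⟩
      set u := g * r t with hudef
      have hmemA : (r (QuotientGroup.mk u))⁻¹ * u ∈ A :=
        QuotientGroup.eq.mp (hr (QuotientGroup.mk u))
      have hval : ρ g (v t) = lam ⟨_, hmemA⟩ • v (QuotientGroup.mk u) := by
        calc ρ g (v t) = ρ u w := by rw [hvdef, hudef, hmul]
          _ = ρ (r (QuotientGroup.mk u)) (ρ ((r (QuotientGroup.mk u))⁻¹ * u) w) := by
              rw [← hmul, mul_inv_cancel_left]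
          _ = ρ (r (QuotientGroup.mk u)) (lam ⟨_, hmemA⟩ • w) := by
              rw [hlam ⟨_, hmemA⟩]
          _ = lam ⟨_, hmemA⟩ • v (QuotientGroup.mk u) := by rw [map_smul, hvdef]
      rw [hval]
      exact Submodule.smul_mem _ _ (subset_span ⟨_, rfl⟩)
    have hmapT : T.map (ρ g) ≤ T := by
      rw [hTdef, Submodule.map_span, span_le]
      exact himg
    exact hmapT ⟨x, hx, rfl⟩
  have hTbot : T ≠ ⊥ := by
    intro h
    have hv1 : v (QuotientGroup.mk 1) ∈ T := subset_span ⟨_, rfl⟩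
    rw [h, Submodule.mem_bot] at hv1
    exact hvne _ hv1
  have hTtop : T = ⊤ := (hirr T hTinv).resolve_left hTbot
  have hle : finrank ℂ W ≤ Fintype.card (U ⧸ A) := by
    have h1 : finrank ℂ (span ℂ (Set.range v)) ≤ Fintype.card (U ⧸ A) :=
      finrank_range_le_card (R := ℂ) v
    calc finrank ℂ W = finrank ℂ (⊤ : Submodule ℂ W) := (finrank_top ℂ W).symm
      _ = finrank ℂ T := by rw [hTtop]
      _ ≤ _ := h1
  have hidx : A.index = Fintype.card (U ⧸ A) := by
    rw [Subgroup.index, Nat.card_eq_fintype_card]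
  omega
end
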